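/- Let ρ : [0,T] → P₂(ℝ^d) be a weak solution of ∂_t ρ = K_σ * G_F[ρ] − ρ with K = N(0, I_d) standard Gaussian mutation kernel and strength σ. Then the energy En(ρ(t)) = (1/2)∫|h|² ρ(t,dh) satisfies d/dt En(ρ(t)) = En(G_F[ρ(t)]) − En(ρ(t)) + d σ²/2. Consequently, any stationary solution ρ^∞ satisfies En(ρ^∞) = En(G_F[ρ^∞]) + d σ²/2 and m(ρ^∞) = m(G_F[ρ^∞]). -/

import Mathlib

/-!
Testing the weak formulation against `φ(h) = ‖h‖²` gives
`d/dt En(ρ) = En(K_σ * G_F[ρ]) − En(ρ)`. Adding independent centered noise `σ ξ` with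
`E‖ξ‖² = d` to a random vector `X` raises `E‖X‖²` by exactly `σ² d`, because the cross term
`2σ⟪X, ξ⟫` has mean zero, and leaves every linear moment unchanged; at a stationary point
`ρ = K_σ * G_F[ρ]` these two facts are the two identities. Since `F` is bounded, `G_F[ρ]` is a
probability measure dominated by a constant multiple of `ρ`, so it inherits the second moment
of `ρ`.
-/

open MeasureTheory ProbabilityTheory Real

/-- Exponential selection operator `G_F[ρ](dh) = e^{F(h)} ρ(dh) / ∫ e^F dρ`. -/
noncomputable def selectOp {d : ℕ} (F : EuclideanSpace ℝ (Fin d) → ℝ)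
    (ρ : Measure (EuclideanSpace ℝ (Fin d))) : Measure (EuclideanSpace ℝ (Fin d)) :=
  ρ.withDensity (fun x => ENNReal.ofReal (exp (F x) / ∫ y, exp (F y) ∂ρ))

/-- Standard Gaussian measure `N(0, I_d)` on `ℝ^d`. -/
noncomputable def stdGaussian (d : ℕ) : Measure (EuclideanSpace ℝ (Fin d)) :=
  (Measure.pi fun _ : Fin d => gaussianReal 0 1).map
    (MeasurableEquiv.toLp 2 (Fin d → ℝ))

/-- Gaussian mutation of strength `σ`: convolution with `N(0, σ² I_d)`. -/
noncomputable def mutate {d : ℕ} (σ : ℝ) (μ : Measure (EuclideanSpace ℝ (Fin d))) :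
    Measure (EuclideanSpace ℝ (Fin d)) :=
  (μ.prod (stdGaussian d)).map (fun p => p.1 + σ • p.2)

/-- Energy `En(ρ) = (1/2)∫ ‖h‖² dρ`. -/
noncomputable def energy {d : ℕ} (ρ : Measure (EuclideanSpace ℝ (Fin d))) : ℝ :=
  (1/2) * ∫ x, ‖x‖ ^ 2 ∂ρ

open scoped RealInnerProductSpace ENNReal

section StdGaussian

variable {E : Type*} [NormedAddCommGroup E] [InnerProductSpace ℝ E] [FiniteDimensional ℝ E]
  [MeasurableSpace E] [BorelSpace E]

lemma integral_inner_mul_inner_stdGaussian (x y : E) :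
    ∫ z, ⟪x, z⟫ * ⟪y, z⟫ ∂(ProbabilityTheory.stdGaussian E) = ⟪x, y⟫ := by
  have h := covarianceBilin_apply (IsGaussian.memLp_two_id (μ := ProbabilityTheory.stdGaussian E))
    x y
  rw [covarianceBilin_stdGaussian, innerSL_apply_apply] at h
  simpa using h.symm

lemma integral_norm_sq_stdGaussian :
    ∫ z, ‖z‖ ^ 2 ∂(ProbabilityTheory.stdGaussian E) = Module.finrank ℝ E := by
  set b := stdOrthonormalBasis ℝ E
  have hint : ∀ i, Integrable (fun z => ⟪b i, z⟫ ^ 2) (ProbabilityTheory.stdGaussian E) :=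
    fun i => (IsGaussian.memLp_two_id.const_inner (b i)).integrable_sq
  simp_rw [← b.sum_sq_inner_right]
  rw [integral_finsetSum _ fun i _ => hint i]
  simp_rw [sq, integral_inner_mul_inner_stdGaussian, real_inner_self_eq_norm_sq, b.orthonormal.1]
  simp

end StdGaussian

section CenteredNoise

variable {E : Type*} [NormedAddCommGroup E] [InnerProductSpace ℝ E] [SecondCountableTopology E]
  [MeasurableSpace E]
  {μ ν : Measure E} [IsProbabilityMeasure μ] [IsProbabilityMeasure ν] (σ : ℝ)

lemma integral_comp_add_smul_of_integral_eq_zero [CompleteSpace E] (L : E →L[ℝ] ℝ)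
    (hμ : Integrable id μ) (hν : Integrable id ν) (hν0 : ∫ y, y ∂ν = 0) :
    ∫ p, L (p.1 + σ • p.2) ∂(μ.prod ν) = ∫ x, L x ∂μ := by
  have hLν : Integrable (fun y => σ * L y) ν := (L.integrable_comp hν).const_mul σ
  have hfiber : ∀ x, ∫ y, L (x + σ • y) ∂ν = L x := fun x => by
    simp_rw [map_add, map_smul, smul_eq_mul]
    rw [integral_add (integrable_const _) hLν, integral_const_mul, L.integral_comp_id_comm hν,
      hν0]
    simp
  rw [integral_prod _ ?_]
  · simp_rw [hfiber]
  · simp_rw [map_add, map_smul, smul_eq_mul]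
    exact ((L.integrable_comp hμ).comp_fst ν).add (hLν.comp_snd μ)

lemma memLp_add_smul_prod (hμ : MemLp id 2 μ) (hν : MemLp id 2 ν) :
    MemLp (fun p : E × E => p.1 + σ • p.2) 2 (μ.prod ν) :=
  (hμ.comp_fst ν).add ((hν.comp_snd μ).const_smul σ)

lemma integral_norm_sq_add_smul_of_integral_eq_zero [CompleteSpace E] (hμ : MemLp id 2 μ)
    (hν : MemLp id 2 ν) (hν0 : ∫ y, y ∂ν = 0) :
    ∫ p, ‖p.1 + σ • p.2‖ ^ 2 ∂(μ.prod ν) = ∫ x, ‖x‖ ^ 2 ∂μ + σ ^ 2 * ∫ y, ‖y‖ ^ 2 ∂ν := by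
  have hν1 : Integrable id ν := hν.integrable one_le_two
  have hν2 : Integrable (fun y => ‖y‖ ^ 2) ν := (memLp_two_iff_integrable_sq_norm hν.1).1 hν
  have hμ2 : Integrable (fun x => ‖x‖ ^ 2) μ := (memLp_two_iff_integrable_sq_norm hμ.1).1 hμ
  have hfiber : ∀ x, ∫ y, ‖x + σ • y‖ ^ 2 ∂ν = ‖x‖ ^ 2 + σ ^ 2 * ∫ y, ‖y‖ ^ 2 ∂ν := fun x => by
    have hinner : Integrable (fun y => 2 * σ * ⟪x, y⟫) ν := (hν1.const_inner x).const_mul _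
    have hcross : ∫ y, 2 * σ * ⟪x, y⟫ ∂ν = 0 := by
      rw [integral_const_mul, integral_inner (f := fun y => y) hν1, hν0]
      simp
    simp_rw [norm_add_sq_real, inner_smul_right, norm_smul, mul_pow, Real.norm_eq_abs, sq_abs,
      ← mul_assoc]
    rw [integral_add ?_ (hν2.const_mul _), integral_add (integrable_const _) hinner, hcross,
      integral_const_mul]
    · simp
    · exact (integrable_const _).add hinner
  rw [integral_prod _ ((memLp_two_iff_integrable_sq_norm (memLp_add_smul_prod σ hμ hν).1).1
    (memLp_add_smul_prod σ hμ hν))]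
  simp_rw [hfiber]
  rw [integral_add hμ2 (integrable_const _), integral_const]
  simp

end CenteredNoise

section Selection

variable {d : ℕ} {F : EuclideanSpace ℝ (Fin d) → ℝ} {M : ℝ}
  {ρ : Measure (EuclideanSpace ℝ (Fin d))}

lemma selectOp_le_smul (hFM : ∀ x, F x ≤ M) :
    selectOp F ρ ≤ ENNReal.ofReal (exp M / ∫ y, exp (F y) ∂ρ) • ρ := by
  rw [selectOp, ← withDensity_const]
  refine withDensity_mono (ae_of_all _ fun x => ENNReal.ofReal_le_ofReal ?_)
  exact div_le_div_of_nonneg_right (exp_le_exp.mpr (hFM x))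
    (integral_nonneg fun y => (exp_pos _).le)

lemma memLp_selectOp (hFM : ∀ x, F x ≤ M) {E : Type*} [NormedAddCommGroup E]
    {f : EuclideanSpace ℝ (Fin d) → E} {p : ℝ≥0∞} (hf : MemLp f p ρ) :
    MemLp f p (selectOp F ρ) :=
  hf.of_measure_le_smul ENNReal.ofReal_ne_top (selectOp_le_smul hFM)

lemma isProbabilityMeasure_selectOp [IsProbabilityMeasure ρ] (hF : Measurable F)
    (hFM : ∀ x, F x ≤ M) : IsProbabilityMeasure (selectOp F ρ) := by
  have hint : Integrable (fun x => exp (F x)) ρ :=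
    .of_bound hF.exp.aestronglyMeasurable (exp M) (ae_of_all _ fun x => by
      rw [Real.norm_of_nonneg (exp_pos _).le]
      exact exp_le_exp.mpr (hFM x))
  have hZ : 0 < ∫ y, exp (F y) ∂ρ := integral_exp_pos hint
  constructor
  rw [selectOp, withDensity_apply _ MeasurableSet.univ, Measure.restrict_univ,
    ← ofReal_integral_eq_lintegral_ofReal (hint.div_const _)
      (ae_of_all _ fun x => div_nonneg (exp_pos _).le hZ.le),
    integral_div, div_self hZ.ne', ENNReal.ofReal_one]

end Selection

section Mutation

variable {d : ℕ} (σ : ℝ) {μ : Measure (EuclideanSpace ℝ (Fin d))}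

lemma mutate_eq_map_prod_stdGaussian :
    mutate σ μ = (μ.prod (ProbabilityTheory.stdGaussian (EuclideanSpace ℝ (Fin d)))).map
      (fun p => p.1 + σ • p.2) := by
  rw [mutate, _root_.stdGaussian, ← map_pi_eq_stdGaussian]
  rfl

variable [IsProbabilityMeasure μ]

lemma memLp_mutate (hμ : MemLp id 2 μ) : MemLp id 2 (mutate σ μ) := by
  rw [mutate_eq_map_prod_stdGaussian, memLp_map_measure_iff aestronglyMeasurable_id
    (by fun_prop)]
  exact memLp_add_smul_prod σ hμ IsGaussian.memLp_two_id

lemma integral_norm_sq_mutate (hμ : MemLp id 2 μ) :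
    ∫ x, ‖x‖ ^ 2 ∂(mutate σ μ) = ∫ x, ‖x‖ ^ 2 ∂μ + d * σ ^ 2 := by
  rw [mutate_eq_map_prod_stdGaussian, integral_map (by fun_prop) (by fun_prop),
    integral_norm_sq_add_smul_of_integral_eq_zero σ hμ IsGaussian.memLp_two_id
      integral_id_stdGaussian, integral_norm_sq_stdGaussian, finrank_euclideanSpace_fin]
  ring

lemma energy_mutate (hμ : MemLp id 2 μ) : energy (mutate σ μ) = energy μ + d * σ ^ 2 / 2 := by
  rw [energy, energy, integral_norm_sq_mutate σ hμ]
  ring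

lemma integral_apply_mutate (hμ : Integrable id μ) (i : Fin d) :
    ∫ x, x i ∂(mutate σ μ) = ∫ x, x i ∂μ := by
  rw [mutate_eq_map_prod_stdGaussian, integral_map (by fun_prop) (by fun_prop)]
  exact integral_comp_add_smul_of_integral_eq_zero σ (EuclideanSpace.proj i) hμ
    IsGaussian.integrable_id integral_id_stdGaussian

end Mutation

theorem energy_evolution_general {d : ℕ} (T : ℝ) (σ : ℝ)
    (F : EuclideanSpace ℝ (Fin d) → ℝ) (hFc : Continuous F)
    (M : ℝ) (hFb : ∀ x, |F x| ≤ M)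
    (ρ : ℝ → Measure (EuclideanSpace ℝ (Fin d)))
    (hprob : ∀ t, IsProbabilityMeasure (ρ t))
    (hmom : ∀ t, Integrable (fun x => ‖x‖ ^ 2) (ρ t))
    (hweak : ∀ φ : EuclideanSpace ℝ (Fin d) → ℝ, Measurable φ →
      (∀ t ∈ Set.Icc (0:ℝ) T, Integrable φ (ρ t) ∧
        Integrable φ (mutate σ (selectOp F (ρ t)))) →
      ∀ t ∈ Set.Icc (0:ℝ) T,
        HasDerivAt (fun s => ∫ x, φ x ∂(ρ s))
          ((∫ x, φ x ∂(mutate σ (selectOp F (ρ t)))) - ∫ x, φ x ∂(ρ t)) t) :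
    (∀ t ∈ Set.Icc (0:ℝ) T,
      HasDerivAt (fun s => energy (ρ s))
        (energy (selectOp F (ρ t)) - energy (ρ t) + d * σ ^ 2 / 2) t) ∧
    (∀ ρinf : Measure (EuclideanSpace ℝ (Fin d)), IsProbabilityMeasure ρinf →
      Integrable (fun x => ‖x‖ ^ 2) ρinf →
      mutate σ (selectOp F ρinf) = ρinf →
      energy ρinf = energy (selectOp F ρinf) + d * σ ^ 2 / 2 ∧
      ∀ i : Fin d, (∫ x, x i ∂ρinf) = ∫ x, x i ∂(selectOp F ρinf)) := by
  have hFM : ∀ x, F x ≤ M := fun x => (le_abs_self _).trans (hFb x)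
  have hsel : ∀ μ : Measure (EuclideanSpace ℝ (Fin d)), IsProbabilityMeasure μ →
      Integrable (fun x => ‖x‖ ^ 2) μ →
      IsProbabilityMeasure (selectOp F μ) ∧ MemLp id 2 (selectOp F μ) := fun μ _ hμ =>
    ⟨isProbabilityMeasure_selectOp hFc.measurable hFM,
      memLp_selectOp hFM ((memLp_two_iff_integrable_sq_norm aestronglyMeasurable_id).2 hμ)⟩
  constructor
  · intro t ht
    have hintegrable : ∀ s ∈ Set.Icc (0:ℝ) T, Integrable (fun x => ‖x‖ ^ 2) (ρ s) ∧
        Integrable (fun x => ‖x‖ ^ 2) (mutate σ (selectOp F (ρ s))) := fun s _ => by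
      obtain ⟨_, hs⟩ := hsel (ρ s) (hprob s) (hmom s)
      exact ⟨hmom s, (memLp_two_iff_integrable_sq_norm aestronglyMeasurable_id).1
        (memLp_mutate σ hs)⟩
    obtain ⟨_, ht2⟩ := hsel (ρ t) (hprob t) (hmom t)
    refine ((hweak _ (by fun_prop) hintegrable t ht).const_mul (1 / 2 : ℝ)).congr_deriv ?_
    rw [← add_sub_right_comm, ← energy_mutate σ ht2, energy, energy]
    ring
  · intro ρinf hρinf hmominf hstat
    obtain ⟨_, hselinf⟩ := hsel ρinf hρinf hmominf
    refine ⟨?_, fun i => ?_⟩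
    · rw [← energy_mutate σ hselinf, hstat]
    · conv_lhs => rw [← hstat]
      exact integral_apply_mutate σ (hselinf.integrable one_le_two) i

/-- Along a weak solution of `∂_t ρ = K_σ * G_F[ρ] − ρ`, the energy satisfies
`d/dt En(ρ(t)) = En(G_F[ρ(t)]) − En(ρ(t)) + d σ²/2`; consequently any stationary
solution `ρ∞` satisfies `En(ρ∞) = En(G_F[ρ∞]) + d σ²/2` and
`m(ρ∞) = m(G_F[ρ∞])`. -/
theorem energy_evolution {d : ℕ} (T : ℝ) (hT : 0 < T) (σ : ℝ) (hσ : 0 < σ)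
    (F : EuclideanSpace ℝ (Fin d) → ℝ) (hFc : Continuous F)
    (M : ℝ) (hFb : ∀ x, |F x| ≤ M)
    (ρ : ℝ → Measure (EuclideanSpace ℝ (Fin d)))
    (hprob : ∀ t, IsProbabilityMeasure (ρ t))
    (hmom : ∀ t, Integrable (fun x => ‖x‖ ^ 2) (ρ t))
    (hweak : ∀ φ : EuclideanSpace ℝ (Fin d) → ℝ, Measurable φ →
      (∀ t ∈ Set.Icc (0:ℝ) T, Integrable φ (ρ t) ∧
        Integrable φ (mutate σ (selectOp F (ρ t)))) →
      ∀ t ∈ Set.Icc (0:ℝ) T,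
        HasDerivAt (fun s => ∫ x, φ x ∂(ρ s))
          ((∫ x, φ x ∂(mutate σ (selectOp F (ρ t)))) - ∫ x, φ x ∂(ρ t)) t) :
    (∀ t ∈ Set.Icc (0:ℝ) T,
      HasDerivAt (fun s => energy (ρ s))
        (energy (selectOp F (ρ t)) - energy (ρ t) + d * σ ^ 2 / 2) t) ∧
    (∀ ρinf : Measure (EuclideanSpace ℝ (Fin d)), IsProbabilityMeasure ρinf →
      Integrable (fun x => ‖x‖ ^ 2) ρinf →
      mutate σ (selectOp F ρinf) = ρinf →
      energy ρinf = energy (selectOp F ρinf) + d * σ ^ 2 / 2 ∧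
      ∀ i : Fin d, (∫ x, x i ∂ρinf) = ∫ x, x i ∂(selectOp F ρinf)) :=
  energy_evolution_general T σ F hFc M hFb ρ hprob hmom hweak
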